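/- Let A be a Banach algebra whose bidual A** has a mixed unit e'' which is the weak* limit of a bounded approximate identity (e_α) of A, and let B be a Banach A-bimodule with actions π_ℓ, π_r such that Z_{e''}(π_r^t) = B**. If B* factors on the right with respect to A (AB* = B*) but does not factor on the left (B*A ≠ B*), then π_ℓ ≠ π_r^t, i.e. there exist a ∈ A and b ∈ B with π_ℓ(a,b) ≠ π_r(b,a). -/

import Mathlib

open Filter Topology ContinuousLinearMap NormedSpace

noncomputable section

variable {X Y Z W E F : Type*}
  [NormedAddCommGroup X] [NormedSpace ℂ X]
  [NormedAddCommGroup Y] [NormedSpace ℂ Y]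
  [NormedAddCommGroup Z] [NormedSpace ℂ Z]
  [NormedAddCommGroup E] [NormedSpace ℂ E]
  [NormedAddCommGroup F] [NormedSpace ℂ F]

/-- The (first) Arens adjoint `m* : Z* × X → Y*` of a bounded bilinear map
`m : X × Y → Z`, characterized by `⟨m*(z',x), y⟩ = ⟨z', m(x,y)⟩`. -/
noncomputable def arensAdj (m : X →L[ℂ] Y →L[ℂ] Z) :
    StrongDual ℂ Z →L[ℂ] X →L[ℂ] StrongDual ℂ Y :=
  ((ContinuousLinearMap.compL ℂ Y Z ℂ).flip.comp m).flip

/-- Shortcut instance (port repair): the current instance search no longer finds the additive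
group structure on a dual space when it is nested three levels deep in `→L[ℂ]`. -/
instance strongDualAddCommGroupShortcut : AddCommGroup (StrongDual ℂ E) :=
  ContinuousLinearMap.addCommGroup

/-- The Arens triple adjoint `m*** : X** × Y** → Z**`. -/
noncomputable def arensExt (m : X →L[ℂ] Y →L[ℂ] Z) :
    StrongDual ℂ (StrongDual ℂ X) →L[ℂ] StrongDual ℂ (StrongDual ℂ Y) →L[ℂ] StrongDual ℂ (StrongDual ℂ Z) :=
  arensAdj (arensAdj (arensAdj m))

/-- A map between dual spaces is weak*-weak* continuous. -/
def IsWeakStarCont (f : StrongDual ℂ E → StrongDual ℂ F) : Prop :=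
  Continuous fun x : WeakDual ℂ E =>
    StrongDual.toWeakDual (f (WeakDual.toStrongDual x))

/-- First topological center of a bounded bilinear map. -/
def arensZ1 (m : X →L[ℂ] Y →L[ℂ] Z) : Set (StrongDual ℂ (StrongDual ℂ X)) :=
  {x'' | IsWeakStarCont fun y'' => arensExt m x'' y''}

/-- Second topological center of a bounded bilinear map. -/
def arensZ2 (m : X →L[ℂ] Y →L[ℂ] Z) : Set (StrongDual ℂ (StrongDual ℂ Y)) :=
  {y'' | IsWeakStarCont fun x'' => arensExt m.flip y'' x''}

/-- `m` is Arens regular when `m*** = m^{t***t}`. -/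
def ArensRegular (m : X →L[ℂ] Y →L[ℂ] Z) : Prop :=
  arensExt m = (arensExt m.flip).flip (𝕜 := ℂ) (𝕜₂ := ℂ) (𝕜₃ := ℂ) (σ₁₃ := RingHom.id ℂ) (σ₂₃ := RingHom.id ℂ) (E := StrongDual ℂ (StrongDual ℂ Y)) (F := StrongDual ℂ (StrongDual ℂ X)) (G := StrongDual ℂ (StrongDual ℂ Z))

/-- `m` is left strongly Arens irregular when `Z₁(m)` is the canonical image of `X`. -/
def LeftStronglyArensIrregular (m : X →L[ℂ] Y →L[ℂ] Z) : Prop :=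
  arensZ1 m = Set.range (NormedSpace.inclusionInDoubleDual ℂ X)

/-- `m` is right strongly Arens irregular when `Z₂(m)` is the canonical image of `Y`. -/
def RightStronglyArensIrregular (m : X →L[ℂ] Y →L[ℂ] Z) : Prop :=
  arensZ2 m = Set.range (NormedSpace.inclusionInDoubleDual ℂ Y)

/-- The adjoint `T* : F* → E*` of a bounded linear map. -/
noncomputable def dualMap' (T : E →L[ℂ] F) : StrongDual ℂ F →L[ℂ] StrongDual ℂ E :=
  (ContinuousLinearMap.compL ℂ E F ℂ).flip T

/-- The second adjoint `T** : E** → F**` of a bounded linear map. -/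
noncomputable def bidualMap (T : E →L[ℂ] F) :
    StrongDual ℂ (StrongDual ℂ E) →L[ℂ] StrongDual ℂ (StrongDual ℂ F) :=
  dualMap' (dualMap' T)

/-- A net in `A`: a function from a nonempty directed preorder to `A`. -/
structure Net (A : Type*) where
  ι : Type
  [pre : Preorder ι]
  [dir : IsDirected ι (· ≤ ·)]
  [ne : Nonempty ι]
  e : ι → A

attribute [instance] Net.pre Net.dir Net.ne

/-- A bounded approximate identity for a (non-unital) Banach algebra. -/
def IsBAI {A : Type*} [NonUnitalNormedRing A] (N : Net A) : Prop :=
  (∃ C : ℝ, ∀ i, ‖N.e i‖ ≤ C) ∧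
  (∀ a : A, Tendsto (fun i => N.e i * a) atTop (𝓝 a)) ∧
  (∀ a : A, Tendsto (fun i => a * N.e i) atTop (𝓝 a))

end

theorem ne_flip_of_dual_factors_right_not_left {A B : Type*}
    [NormedAddCommGroup A] [NormedSpace ℂ A] [NormedAddCommGroup B] [NormedSpace ℂ B]
    (πl : A →L[ℂ] B →L[ℂ] B) (πr : B →L[ℂ] A →L[ℂ] B)
    (hfr : ∀ b' : StrongDual ℂ B, ∃ (a : A) (x' : StrongDual ℂ B), b' = arensAdj πr.flip x' a)
    (hnfl : ¬ ∀ b' : StrongDual ℂ B, ∃ (x' : StrongDual ℂ B) (a : A), b' = arensAdj πl x' a) :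
    πl ≠ πr.flip := by
  rintro rfl
  exact hnfl fun b' => (hfr b').elim fun a ⟨x', hx⟩ => ⟨x', a, hx⟩

theorem stmt_17_general {A B : Type*} [NonUnitalNormedRing A] [NormedSpace ℂ A] [NormedAddCommGroup B] [NormedSpace ℂ B]
    (πl : A →L[ℂ] B →L[ℂ] B) (πr : B →L[ℂ] A →L[ℂ] B)
    (hfr : ∀ b' : StrongDual ℂ B, ∃ (a : A) (x' : StrongDual ℂ B), b' = arensAdj πr.flip x' a)
    (hnfl : ¬ ∀ b' : StrongDual ℂ B, ∃ (x' : StrongDual ℂ B) (a : A), b' = arensAdj πl x' a) :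
    ∃ (a : A) (b : B), πl a b ≠ πr b a := by
  by_contra! h
  exact ne_flip_of_dual_factors_right_not_left πl πr hfr hnfl (ext fun a => ext (h a))

/-- If `B*` factors on the right but not on the left with respect to `A`,
then `π_ℓ ≠ π_r^t`. -/
theorem stmt_17 {A B : Type*} [NonUnitalNormedRing A] [NormedSpace ℂ A] [IsScalarTower ℂ A A] [SMulCommClass ℂ A A] [CompleteSpace A] [NormedAddCommGroup B] [NormedSpace ℂ B] [CompleteSpace B]
    (πl : A →L[ℂ] B →L[ℂ] B) (πr : B →L[ℂ] A →L[ℂ] B)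
    (hl : ∀ (a₁ a₂ : A) (b : B), πl (a₁ * a₂) b = πl a₁ (πl a₂ b))
    (hr : ∀ (b : B) (a₁ a₂ : A), πr (πr b a₁) a₂ = πr b (a₁ * a₂))
    (hc : ∀ (a₁ : A) (b : B) (a₂ : A), πr (πl a₁ b) a₂ = πl a₁ (πr b a₂))
    (e'' : StrongDual ℂ (StrongDual ℂ A))
    (hmixr : ∀ a'' : StrongDual ℂ (StrongDual ℂ A), arensExt (ContinuousLinearMap.mul ℂ A) a'' e'' = a'')
    (hmixl : ∀ a'' : StrongDual ℂ (StrongDual ℂ A),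
      arensExt (ContinuousLinearMap.mul ℂ A).flip a'' e'' = a'')
    (N : Net A) (hN : IsBAI N)
    (hlim : ∀ a' : StrongDual ℂ A, Tendsto (fun i => a' (N.e i)) atTop (𝓝 (e'' a')))
    (hZ : ∀ b'' : StrongDual ℂ (StrongDual ℂ B), arensExt πr.flip e'' b'' = arensExt πr b'' e'')
    (hfr : ∀ b' : StrongDual ℂ B, ∃ (a : A) (x' : StrongDual ℂ B), b' = arensAdj πr.flip x' a)
    (hnfl : ¬ ∀ b' : StrongDual ℂ B, ∃ (x' : StrongDual ℂ B) (a : A), b' = arensAdj πl x' a) :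
    ∃ (a : A) (b : B), πl a b ≠ πr b a :=
  stmt_17_general πl πr hfr hnfl
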